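/- With P_max defined as the chain-infimum of δ̂, P_max is positive definite: P_max(ρ,σ) = 0 if and only if ρ = σ. -/

import Mathlib

open Matrix BigOperators ComplexOrder

variable {n : Type*} [Fintype n] [DecidableEq n]

/-- Trace norm (Schatten 1-norm) of a matrix. -/
noncomputable def traceNorm (A : Matrix n n ℂ) : ℝ :=
  (((Matrix.posSemidef_conjTranspose_mul_self A).1.eigenvectorUnitary : Matrix n n ℂ) *
    diagonal (((↑) : ℝ → ℂ) ∘ (√·) ∘ (Matrix.posSemidef_conjTranspose_mul_self A).1.eigenvalues) *
    (star (Matrix.posSemidef_conjTranspose_mul_self A).1.eigenvectorUnitary : Matrix n n ℂ)).trace.re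

/-- A density operator: positive semidefinite with trace 1. -/
def IsDensity (ρ : Matrix n n ℂ) : Prop := ρ.PosSemidef ∧ ρ.trace = 1

/-- δ̃(ρ,σ): smallest mixing weight ε with ρ = (1-ε)σ + εσ'. -/
noncomputable def deltaTilde (ρ σ : Matrix n n ℂ) : ℝ :=
  sInf {ε : ℝ | ε ∈ Set.Icc (0:ℝ) 1 ∧
    ∃ σ' : Matrix n n ℂ, IsDensity σ' ∧ ρ = (1 - ε) • σ + ε • σ'}

/-- δ̂ = min of δ̃ in both orders. -/
noncomputable def deltaHat (ρ σ : Matrix n n ℂ) : ℝ :=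
  min (deltaTilde ρ σ) (deltaTilde σ ρ)

/-- P_max: infimum over finite chains of density operators from ρ to σ of the
sum of δ̂ over consecutive pairs. -/
noncomputable def Pmax (ρ σ : Matrix n n ℂ) : ℝ :=
  sInf {s : ℝ | ∃ (m : ℕ) (ω : Fin (m + 1) → Matrix n n ℂ),
    ω 0 = ρ ∧ ω (Fin.last m) = σ ∧ (∀ i, IsDensity (ω i)) ∧
    s = ∑ i : Fin m, deltaHat (ω i.castSucc) (ω i.succ)}

/-! Every density matrix has entrywise sup norm at most `1`, since `‖ρᵢⱼ‖² ≤ ρᵢᵢ ρⱼⱼ`. Hence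
`ρ = (1 - ε) σ + ε σ'` gives `‖ρ - σ‖ = ε ‖σ' - σ‖ ≤ 2ε`, and the triangle inequality along a
chain gives `‖ρ - σ‖ ≤ 2 P_max(ρ, σ)`; the sup norm serves as well as the trace norm here. -/

theorem norm_sub_le_sum_norm_sub {E : Type*} [SeminormedAddCommGroup E] :
    ∀ {m : ℕ} (ω : Fin (m + 1) → E),
      ‖ω 0 - ω (Fin.last m)‖ ≤ ∑ i : Fin m, ‖ω i.castSucc - ω i.succ‖
  | 0, ω => by simp
  | m + 1, ω => by
    rw [Fin.sum_univ_castSucc, ← Fin.succ_last]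
    calc ‖ω 0 - ω (Fin.last m).succ‖
        ≤ ‖ω 0 - ω (Fin.last m).castSucc‖ + ‖ω (Fin.last m).castSucc - ω (Fin.last m).succ‖ :=
          norm_sub_le_norm_sub_add_norm_sub _ _ _
      _ ≤ _ := by
          gcongr
          simpa only [Function.comp_apply, Fin.succ_castSucc, Fin.castSucc_zero] using
            norm_sub_le_sum_norm_sub (ω ∘ Fin.castSucc)

section

variable {d : Type*}

theorem Matrix.PosSemidef.norm_apply_sq_le {A : Matrix d d ℂ} (hA : A.PosSemidef) (i j : d) :
    ‖A i j‖ ^ 2 ≤ (A i i).re * (A j j).re := by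
  have hdet := (hA.submatrix ![i, j]).det_nonneg
  simp only [det_fin_two, submatrix_apply, cons_val_zero, cons_val_one, sub_nonneg,
    ← hA.isHermitian.apply j i] at hdet
  have hi := Complex.nonneg_iff.mp (hA.diag_nonneg (i := i))
  have hj := Complex.nonneg_iff.mp (hA.diag_nonneg (i := j))
  rw [Complex.sq_norm, Complex.normSq_apply]
  simpa [Complex.mul_re, ← hi.2, ← hj.2] using (Complex.le_def.mp hdet).1

variable [Fintype d]

theorem IsDensity.re_diag_le_one {ρ : Matrix d d ℂ} (hρ : IsDensity ρ) (i : d) :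
    (ρ i i).re ≤ 1 := by
  have htrace : ∑ k, (ρ k k).re = 1 := by
    simpa [Matrix.trace, Complex.re_sum] using congrArg Complex.re hρ.2
  rw [← htrace]
  exact Finset.single_le_sum (f := fun k => (ρ k k).re)
    (fun k _ => (Complex.nonneg_iff.mp hρ.1.diag_nonneg).1) (Finset.mem_univ i)

attribute [local instance] Matrix.normedAddCommGroup Matrix.normSMulClass

theorem IsDensity.norm_le_one {ρ : Matrix d d ℂ} (hρ : IsDensity ρ) : ‖ρ‖ ≤ 1 := by
  refine (norm_le_iff zero_le_one).mpr fun i j => ?_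
  have hdiag : (ρ i i).re * (ρ j j).re ≤ 1 := mul_le_one₀ (hρ.re_diag_le_one i)
    (Complex.nonneg_iff.mp hρ.1.diag_nonneg).1 (hρ.re_diag_le_one j)
  exact (pow_le_one_iff_of_nonneg (norm_nonneg _) two_ne_zero).mp
    ((hρ.1.norm_apply_sq_le i j).trans hdiag)

theorem deltaTilde_nonneg (ρ σ : Matrix d d ℂ) : 0 ≤ deltaTilde ρ σ :=
  Real.sInf_nonneg fun _ hε => hε.1.1

theorem deltaHat_nonneg (ρ σ : Matrix d d ℂ) : 0 ≤ deltaHat ρ σ :=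
  le_min (deltaTilde_nonneg ρ σ) (deltaTilde_nonneg σ ρ)

theorem Pmax_self {ρ : Matrix d d ℂ} (hρ : IsDensity ρ) : Pmax ρ ρ = 0 := by
  refine IsLeast.csInf_eq ⟨⟨0, fun _ => ρ, rfl, rfl, fun _ => hρ, by simp⟩, ?_⟩
  rintro s ⟨m, ω, -, -, -, rfl⟩
  exact Finset.sum_nonneg fun i _ => deltaHat_nonneg _ _

theorem norm_sub_le_two_mul_deltaTilde {ρ σ : Matrix d d ℂ} (hρ : IsDensity ρ)
    (hσ : IsDensity σ) : ‖ρ - σ‖ ≤ 2 * deltaTilde ρ σ := by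
  rw [← div_le_iff₀' two_pos]
  refine le_csInf ⟨1, ⟨zero_le_one, le_rfl⟩, ρ, hρ, by simp⟩ ?_
  rintro ε ⟨⟨hε, -⟩, σ', hσ', rfl⟩
  have hdiff : (1 - ε) • σ + ε • σ' - σ = ε • (σ' - σ) := by module
  have hbound : ‖σ' - σ‖ ≤ 2 :=
    (norm_sub_le σ' σ).trans (by linarith [hσ'.norm_le_one, hσ.norm_le_one])
  rw [hdiff, norm_smul, Real.norm_of_nonneg hε]
  linarith [mul_le_mul_of_nonneg_left hbound hε]

theorem norm_sub_le_two_mul_deltaHat {ρ σ : Matrix d d ℂ} (hρ : IsDensity ρ)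
    (hσ : IsDensity σ) : ‖ρ - σ‖ ≤ 2 * deltaHat ρ σ := by
  rw [deltaHat, mul_min_of_nonneg _ _ zero_le_two]
  exact le_min (norm_sub_le_two_mul_deltaTilde hρ hσ)
    (norm_sub_rev ρ σ ▸ norm_sub_le_two_mul_deltaTilde hσ hρ)

theorem norm_sub_le_two_mul_Pmax {ρ σ : Matrix d d ℂ} (hρ : IsDensity ρ) (hσ : IsDensity σ) :
    ‖ρ - σ‖ ≤ 2 * Pmax ρ σ := by
  rw [← div_le_iff₀' two_pos]
  refine le_csInf ⟨_, 1, ![ρ, σ], rfl, rfl, Fin.forall_fin_two.mpr ⟨hρ, hσ⟩, rfl⟩ ?_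
  rintro s ⟨m, ω, rfl, rfl, hω, rfl⟩
  rw [div_le_iff₀' two_pos, Finset.mul_sum]
  exact (norm_sub_le_sum_norm_sub ω).trans
    (Finset.sum_le_sum fun i _ => norm_sub_le_two_mul_deltaHat (hω _) (hω _))

theorem eq_of_Pmax_eq_zero {ρ σ : Matrix d d ℂ} (hρ : IsDensity ρ) (hσ : IsDensity σ)
    (h : Pmax ρ σ = 0) : ρ = σ := by
  have hnorm := norm_sub_le_two_mul_Pmax hρ hσ
  rw [h, mul_zero] at hnorm
  exact sub_eq_zero.mp (norm_le_zero_iff.mp hnorm)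

end

theorem Pmax_pos_def (ρ σ : Matrix n n ℂ)
    (hρ : IsDensity ρ) (hσ : IsDensity σ) :
    Pmax ρ σ = 0 ↔ ρ = σ :=
  ⟨eq_of_Pmax_eq_zero hρ hσ, fun h => h ▸ Pmax_self hρ⟩
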